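/- Let N₅ be the pentagon lattice {0, b, a, c, 1} with 0 < b < a < 1, 0 < c < 1, and c incomparable to a and b. Then the regular open algebra B(N₅) of X_{N₅} has exactly 8 elements and is generated as a Boolean algebra by the image of the canonical embedding e : N₅ → B(N₅); in particular B(N₅) coincides with the Boolean subalgebra generated by e[N₅]. -/

import Mathlib

/-- The pentagon lattice `N₅ = {0, b, a, c, 1}` with `0 < b < a < 1`,
`0 < c < 1`, and `c` incomparable to `a` and `b`. -/
inductive N5 : Type
  | z | b | a | c | o
deriving DecidableEq

instance : Fintype N5 :=
  ⟨{N5.z, N5.b, N5.a, N5.c, N5.o}, fun x => by cases x <;> decide⟩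

/-- The order of `N₅`: `x ≤ y` iff `x = y`, or `x = 0`, or `y = 1`,
or `(x,y) = (b,a)`. -/
def N5.le (x y : N5) : Prop :=
  x = y ∨ x = N5.z ∨ y = N5.o ∨ (x = N5.b ∧ y = N5.a)

instance : DecidableRel N5.le := fun x y =>
  inferInstanceAs (Decidable (x = y ∨ x = N5.z ∨ y = N5.o ∨ (x = N5.b ∧ y = N5.a)))

theorem N5.le_refl : ∀ x : N5, N5.le x x := by decide
theorem N5.le_trans : ∀ x y w : N5, N5.le x y → N5.le y w → N5.le x w := by decide
theorem N5.le_antisymm : ∀ x y : N5, N5.le x y → N5.le y x → x = y := by decide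

instance : PartialOrder N5 where
  le := N5.le
  le_refl := N5.le_refl
  le_trans := N5.le_trans
  le_antisymm := N5.le_antisymm

instance : DecidableRel ((· ≤ ·) : N5 → N5 → Prop) := fun x y =>
  inferInstanceAs (Decidable (N5.le x y))

/-- The poset `X_{N₅} = {(x,y) ∈ N₅ × N₅ | x ≰ y}` with
`(x,y) ⊑ (x',y') ↔ x ≤ x' ∧ y' ≤ y`. -/
def XN5 : Type := {p : N5 × N5 // ¬ p.1 ≤ p.2}

def XN5.mk (p : N5 × N5) (h : ¬ p.1 ≤ p.2) : XN5 := ⟨p, h⟩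

def XN5.val (x : XN5) : N5 × N5 := Subtype.val x

instance : PartialOrder XN5 where
  le x y := x.val.1 ≤ y.val.1 ∧ y.val.2 ≤ x.val.2
  le_refl x := ⟨le_refl _, le_refl _⟩
  le_trans x y z h h' := ⟨h.1.trans h'.1, h'.2.trans h.2⟩
  le_antisymm x y h h' :=
    Subtype.ext (Prod.ext (le_antisymm h.1 h'.1) (le_antisymm h'.2 h.2))

/-- Interior in the downset topology: `□U = {x | ↓x ⊆ U}`. -/
def box (U : Set XN5) : Set XN5 := {x | ∀ y, y ≤ x → y ∈ U}

/-- Closure in the downset topology: `◇U = {x | ↓x ∩ U ≠ ∅}`. -/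
def dia (U : Set XN5) : Set XN5 := {x | ∃ y, y ≤ x ∧ y ∈ U}

/-- The `⊑`-downset of `x` in `X_{N₅}`. -/
def dn (x : XN5) : Set XN5 := {y | y ≤ x}

theorem N5.le_z' : ∀ x : N5, x ≤ N5.z → x = N5.z := by decide

/-- The canonical map `e : N₅ → B(N₅)`, `e x = □◇↓(x,0)` for `x ≠ 0`,
`e 0 = ∅`. -/
def eN5 (x : N5) : Set XN5 :=
  if h : x = N5.z then ∅
  else box (dia (dn (XN5.mk (x, N5.z) (fun hle => h (N5.le_z' x hle)))))

/-- `G` is (the carrier of) a Boolean subalgebra of the regular open algebra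
`B(N₅)`: a family of regular open sets containing `⊥ = ∅` and `⊤ = X_{N₅}`,
closed under meet (intersection), join (`□◇` of union) and complement
(`□` of set complement). -/
def IsBooleanSubalg (G : Set (Set XN5)) : Prop :=
  (∀ W ∈ G, W = box (dia W)) ∧ ∅ ∈ G ∧ Set.univ ∈ G ∧
  (∀ W ∈ G, ∀ V ∈ G, W ∩ V ∈ G) ∧
  (∀ W ∈ G, ∀ V ∈ G, box (dia (W ∪ V)) ∈ G) ∧
  (∀ W ∈ G, box Wᶜ ∈ G)

/-- The Boolean subalgebra of `B(N₅)` generated by the image of `e`. -/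
def genN5 : Set (Set XN5) :=
  ⋂₀ {G | IsBooleanSubalg G ∧ Set.range eN5 ⊆ G}

/-!
Every point of `X_{N₅}` lies above one of its three minimal points `(b,c)`, `(a,b)`, `(c,a)`.
A regular open set `U` of the downset topology is a downset with `◇U = ◇(U ∩ Min)`, so it is
recovered from its minimal points as `□◇(U ∩ Min)`, and on minimal points `□` and `◇` act as the
identity; hence `U ↦ U ∩ Min` identifies `B(N₅)` with the powerset of a 3-element set. The
minimal points of `e b`, `e a`, `e c` are `{(b,c)}`, `{(b,c),(a,b)}`, `{(c,a)}`, so the three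
atoms `e b`, `e a ∧ ¬e b`, `e c` of `B(N₅)` lie in the subalgebra generated by `e[N₅]`.
-/

open Set

instance : DecidableEq XN5 :=
  inferInstanceAs (DecidableEq {p : N5 × N5 // ¬ p.1 ≤ p.2})

instance : Fintype XN5 :=
  inferInstanceAs (Fintype {p : N5 × N5 // ¬ p.1 ≤ p.2})

instance : DecidableRel ((· ≤ ·) : XN5 → XN5 → Prop) := fun x y =>
  inferInstanceAs (Decidable (x.val.1 ≤ y.val.1 ∧ y.val.2 ≤ x.val.2))

lemma N5.z_le (x : N5) : N5.z ≤ x := Or.inr (Or.inl rfl)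

lemma box_subset (U : Set XN5) : box U ⊆ U := fun x hx => hx x le_rfl

lemma subset_dia (U : Set XN5) : U ⊆ dia U := fun x hx => ⟨x, le_rfl, hx⟩

lemma box_mono {U V : Set XN5} (h : U ⊆ V) : box U ⊆ box V :=
  fun _ hx y hy => h (hx y hy)

lemma dia_mono {U V : Set XN5} (h : U ⊆ V) : dia U ⊆ dia V :=
  fun _ ⟨y, hy, hyU⟩ => ⟨y, hy, h hyU⟩

lemma dia_dia_subset (U : Set XN5) : dia (dia U) ⊆ dia U :=
  fun _ ⟨_, hyx, z, hzy, hzU⟩ => ⟨z, hzy.trans hyx, hzU⟩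

lemma isLowerSet_box (U : Set XN5) : IsLowerSet (box U) :=
  fun _ _ hyx hx z hzy => hx z (hzy.trans hyx)

lemma IsLowerSet.subset_box_dia {U : Set XN5} (hU : IsLowerSet U) : U ⊆ box (dia U) :=
  fun _ hx y hyx => ⟨y, le_rfl, hU hyx hx⟩

lemma isLowerSet_of_eq_box_dia {U : Set XN5} (hU : U = box (dia U)) : IsLowerSet U :=
  hU ▸ isLowerSet_box _

lemma box_dia_box_dia (U : Set XN5) : box (dia (box (dia U))) = box (dia U) :=
  (box_mono ((dia_mono (box_subset _)).trans (dia_dia_subset U))).antisymm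
    (isLowerSet_box _).subset_box_dia

lemma empty_eq_box_dia_empty : (∅ : Set XN5) = box (dia ∅) :=
  (eq_empty_of_forall_notMem fun _ hx => (box_subset _ hx).elim fun _ h => h.2).symm

lemma univ_eq_box_dia_univ : (univ : Set XN5) = box (dia univ) :=
  isLowerSet_univ.subset_box_dia.antisymm (subset_univ _)

lemma inter_eq_box_dia_inter {W V : Set XN5} (hW : W = box (dia W)) (hV : V = box (dia V)) :
    W ∩ V = box (dia (W ∩ V)) := by
  have hWV : IsLowerSet (W ∩ V) :=
    (isLowerSet_of_eq_box_dia hW).inter (isLowerSet_of_eq_box_dia hV)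
  refine hWV.subset_box_dia.antisymm (subset_inter ?_ ?_)
  · exact (box_mono (dia_mono inter_subset_left)).trans hW.ge
  · exact (box_mono (dia_mono inter_subset_right)).trans hV.ge

/-- The interior of a closed set is regular open. -/
lemma box_compl_eq_box_dia {W : Set XN5} (hW : IsLowerSet W) : box Wᶜ = box (dia (box Wᶜ)) :=
  (isLowerSet_box _).subset_box_dia.antisymm
    (box_mono fun _ ⟨_, hzy, hz⟩ hy => box_subset _ hz (hW hzy hy))

lemma isBooleanSubalg_regularOpen : IsBooleanSubalg {U : Set XN5 | U = box (dia U)} :=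
  ⟨fun _ hW => hW, empty_eq_box_dia_empty, univ_eq_box_dia_univ,
    fun _ hW _ hV => inter_eq_box_dia_inter hW hV,
    fun W _ V _ => (box_dia_box_dia (W ∪ V)).symm,
    fun _ hW => box_compl_eq_box_dia (isLowerSet_of_eq_box_dia hW)⟩

lemma IsMin.mem_box_iff {m : XN5} (hm : IsMin m) {U : Set XN5} : m ∈ box U ↔ m ∈ U :=
  ⟨fun h => box_subset U h, fun h _ hy => hm.eq_of_le hy ▸ h⟩

lemma IsMin.mem_dia_iff {m : XN5} (hm : IsMin m) {U : Set XN5} : m ∈ dia U ↔ m ∈ U :=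
  ⟨fun ⟨_, hy, hyU⟩ => hm.eq_of_le hy ▸ hyU, fun h => subset_dia U h⟩

lemma box_inter_setOf_isMin (U : Set XN5) : box U ∩ {x | IsMin x} = U ∩ {x | IsMin x} :=
  ext fun _ => and_congr_left fun hm => IsMin.mem_box_iff hm

lemma dia_inter_setOf_isMin (U : Set XN5) : dia U ∩ {x | IsMin x} = U ∩ {x | IsMin x} :=
  ext fun _ => and_congr_left fun hm => IsMin.mem_dia_iff hm

lemma box_dia_inter_setOf_isMin (U : Set XN5) :
    box (dia U) ∩ {x | IsMin x} = U ∩ {x | IsMin x} := by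
  rw [box_inter_setOf_isMin, dia_inter_setOf_isMin]

lemma exists_isMin_le (x : XN5) : ∃ m ≤ x, IsMin m := by
  obtain ⟨m, hmx, hm⟩ := exists_minimal_le_of_wellFoundedLT (fun _ => True) x trivial
  exact ⟨m, hmx, minimal_true.mp hm⟩

lemma IsLowerSet.dia_inter_setOf_isMin {U : Set XN5} (hU : IsLowerSet U) :
    dia (U ∩ {x | IsMin x}) = dia U := by
  refine (dia_mono inter_subset_left).antisymm fun x ⟨y, hyx, hyU⟩ => ?_
  obtain ⟨m, hmy, hm⟩ := exists_isMin_le y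
  exact ⟨m, hmy.trans hyx, hU hmy hyU, hm⟩

lemma eq_box_dia_inter_setOf_isMin {U : Set XN5} (hU : U = box (dia U)) :
    U = box (dia (U ∩ {x | IsMin x})) := by
  rw [(isLowerSet_of_eq_box_dia hU).dia_inter_setOf_isMin]
  exact hU

lemma eq_of_inter_setOf_isMin_eq {U V : Set XN5} (hU : U = box (dia U)) (hV : V = box (dia V))
    (h : U ∩ {x | IsMin x} = V ∩ {x | IsMin x}) : U = V := by
  rw [eq_box_dia_inter_setOf_isMin hU, eq_box_dia_inter_setOf_isMin hV, h]

lemma regularOpen_eq_image_powerset :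
    {U : Set XN5 | U = box (dia U)} = (fun S => box (dia S)) '' 𝒫 {x | IsMin x} := by
  ext U
  constructor
  · exact fun hU =>
      ⟨U ∩ {x | IsMin x}, inter_subset_right, (eq_box_dia_inter_setOf_isMin hU).symm⟩
  · rintro ⟨S, -, rfl⟩
    exact (box_dia_box_dia S).symm

lemma ncard_regularOpen :
    {U : Set XN5 | U = box (dia U)}.ncard = 2 ^ {x : XN5 | IsMin x}.ncard := by
  rw [regularOpen_eq_image_powerset, InjOn.ncard_image, ncard_powerset]
  intro S hS T hT hST
  rw [← inter_eq_left.mpr hS, ← inter_eq_left.mpr hT, ← box_dia_inter_setOf_isMin S,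
    ← box_dia_inter_setOf_isMin T]
  exact congrArg (· ∩ {x | IsMin x}) hST

lemma regularOpen_subset_of_isBooleanSubalg {G : Set (Set XN5)} (hG : IsBooleanSubalg G)
    (hatoms : ∀ m, IsMin m → ∃ W ∈ G, W ∩ {x | IsMin x} = {m}) :
    {U : Set XN5 | U = box (dia U)} ⊆ G := by
  obtain ⟨hreg, hempty, -, -, hjoin, -⟩ := hG
  have htraces : ∀ S ⊆ {x | IsMin x}, ∃ W ∈ G, W ∩ {x | IsMin x} = S := by
    intro S hS
    induction S, S.toFinite using Set.Finite.induction_on with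
    | empty => exact ⟨∅, hempty, empty_inter _⟩
    | @insert a S _ _ ih =>
      obtain ⟨W, hW, hWS⟩ := ih ((subset_insert a S).trans hS)
      obtain ⟨A, hA, hAa⟩ := hatoms a (hS (mem_insert a S))
      refine ⟨box (dia (A ∪ W)), hjoin A hA W hW, ?_⟩
      rw [box_dia_inter_setOf_isMin, union_inter_distrib_right, hAa, hWS, insert_eq]
  intro U hU
  obtain ⟨W, hW, hWU⟩ := htraces (U ∩ {x | IsMin x}) inter_subset_right
  rwa [eq_of_inter_setOf_isMin_eq hU (hreg W hW) hWU.symm]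

def xbc : XN5 := ⟨(N5.b, N5.c), by decide⟩
def xab : XN5 := ⟨(N5.a, N5.b), by decide⟩
def xca : XN5 := ⟨(N5.c, N5.a), by decide⟩

lemma isMin_iff_eq : ∀ x : XN5, IsMin x ↔ x = xbc ∨ x = xab ∨ x = xca := by
  unfold IsMin
  decide

lemma ncard_setOf_isMin : {x : XN5 | IsMin x}.ncard = 3 :=
  ncard_eq_three.mpr ⟨xbc, xab, xca, by decide, by decide, by decide,
    ext fun x => (isMin_iff_eq x).trans (by simp only [mem_insert_iff, mem_singleton_iff])⟩

lemma IsMin.mem_eN5_iff {m : XN5} (hm : IsMin m) (x : N5) : m ∈ eN5 x ↔ m.val.1 ≤ x := by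
  by_cases hx : x = N5.z
  · subst hx
    refine iff_of_false (by simp [eN5]) fun hle => m.property ?_
    show m.val.1 ≤ m.val.2
    rw [N5.le_z' _ hle]
    exact N5.z_le _
  · rw [eN5, dif_neg hx, hm.mem_box_iff, hm.mem_dia_iff]
    exact and_iff_left (N5.z_le _)

lemma inter_setOf_isMin_eq_singleton {W : Set XN5} {a : XN5} (ha : IsMin a)
    (h : ∀ x, IsMin x → (x ∈ W ↔ x = a)) : W ∩ {x | IsMin x} = {a} := by
  ext x
  refine ⟨fun ⟨hx, hm⟩ => (h x hm).1 hx, ?_⟩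
  rintro rfl
  exact ⟨(h x ha).2 rfl, ha⟩

lemma exists_inter_setOf_isMin_eq_singleton {G : Set (Set XN5)} (hG : IsBooleanSubalg G)
    (he : range eN5 ⊆ G) (a : XN5) (ha : IsMin a) : ∃ W ∈ G, W ∩ {x | IsMin x} = {a} := by
  obtain ⟨-, -, -, hmeet, -, hcompl⟩ := hG
  have hb : eN5 N5.b ∈ G := he ⟨_, rfl⟩
  rcases (isMin_iff_eq a).1 ha with rfl | rfl | rfl
  · refine ⟨eN5 N5.b, hb, inter_setOf_isMin_eq_singleton ha fun x hx => ?_⟩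
    rw [hx.mem_eN5_iff]
    rcases (isMin_iff_eq x).1 hx with rfl | rfl | rfl <;> decide
  · refine ⟨eN5 N5.a ∩ box (eN5 N5.b)ᶜ, hmeet _ (he ⟨_, rfl⟩) _ (hcompl _ hb),
      inter_setOf_isMin_eq_singleton ha fun x hx => ?_⟩
    rw [mem_inter_iff, hx.mem_box_iff, mem_compl_iff, hx.mem_eN5_iff, hx.mem_eN5_iff]
    rcases (isMin_iff_eq x).1 hx with rfl | rfl | rfl <;> decide
  · refine ⟨eN5 N5.c, he ⟨_, rfl⟩, inter_setOf_isMin_eq_singleton ha fun x hx => ?_⟩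
    rw [hx.mem_eN5_iff]
    rcases (isMin_iff_eq x).1 hx with rfl | rfl | rfl <;> decide

lemma range_eN5_subset_regularOpen : range eN5 ⊆ {U : Set XN5 | U = box (dia U)} := by
  rintro _ ⟨x, rfl⟩
  by_cases hx : x = N5.z
  · rw [eN5, dif_pos hx]
    exact empty_eq_box_dia_empty
  · rw [eN5, dif_neg hx]
    exact (box_dia_box_dia _).symm

/-- the regular open algebra `B(N₅)` has exactly 8 elements and
coincides with the Boolean subalgebra generated by the image of the canonical
embedding `e : N₅ → B(N₅)`. -/
theorem N5_regular_open_algebra :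
    Set.ncard {U : Set XN5 | U = box (dia U)} = 8 ∧
    genN5 = {U : Set XN5 | U = box (dia U)} := by
  refine ⟨by rw [ncard_regularOpen, ncard_setOf_isMin]; rfl, ?_⟩
  have hgen_subset : genN5 ⊆ {U : Set XN5 | U = box (dia U)} :=
    sInter_subset_of_mem ⟨isBooleanSubalg_regularOpen, range_eN5_subset_regularOpen⟩
  exact hgen_subset.antisymm <| subset_sInter fun G hG =>
    regularOpen_subset_of_isBooleanSubalg hG.1 (exists_inter_setOf_isMin_eq_singleton hG.1 hG.2)
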